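/- Let E be an exact category with enough projectives and P a projective cover of E. Then E is cartesian closed if and only if every object X of P is exponentiable in E, i.e. the functor (−) × X : E → E has a right adjoint. -/

import Mathlib

open CategoryTheory Limits

namespace ExComp

universe v u

variable {E : Type u} [Category.{v} E]

/-- A regular epimorphism, as a property of a morphism. -/
def RegEpi {A B : E} (f : A ⟶ B) : Prop := Nonempty (RegularEpi f)

/-- An object is (regular) projective if its covariant hom functor sends regular
epimorphisms to surjections. -/
def RegProjective (X : E) : Prop :=
  ∀ ⦃A B : E⦄ (e : A ⟶ B), RegEpi e → ∀ f : X ⟶ B, ∃ g : X ⟶ A, g ≫ e = f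

/-- `E` has enough projectives: every object admits a regular epimorphism from a
projective object. -/
def EnoughRegProjectives (E : Type u) [Category.{v} E] : Prop :=
  ∀ A : E, ∃ (X : E) (p : X ⟶ A), RegProjective X ∧ RegEpi p

/-- An internal equivalence relation: a jointly monic, reflexive, symmetric and
transitive pair of parallel arrows. -/
structure IsEquivRelPair {R X : E} (r₁ r₂ : R ⟶ X) : Prop where
  jointlyMono : ∀ ⦃T : E⦄ (h k : T ⟶ R), h ≫ r₁ = k ≫ r₁ → h ≫ r₂ = k ≫ r₂ → h = k
  refl : ∃ d : X ⟶ R, d ≫ r₁ = 𝟙 X ∧ d ≫ r₂ = 𝟙 X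
  symm : ∃ s : R ⟶ R, s ≫ r₁ = r₂ ∧ s ≫ r₂ = r₁
  trans : ∀ ⦃T : E⦄ (p q : T ⟶ R), p ≫ r₂ = q ≫ r₁ →
    ∃ t : T ⟶ R, t ≫ r₁ = p ≫ r₁ ∧ t ≫ r₂ = q ≫ r₂

/-- An exact category: a finitely complete category where every morphism factors as a
regular epi followed by a mono, regular epis are stable under pullback, and every
internal equivalence relation is effective (it is the kernel pair of the coequaliser
it admits). -/
structure IsExact (E : Type u) [Category.{v} E] [HasFiniteLimits E] : Prop where
  factor : ∀ ⦃A B : E⦄ (f : A ⟶ B), ∃ (I : E) (e : A ⟶ I) (m : I ⟶ B),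
    RegEpi e ∧ Mono m ∧ e ≫ m = f
  stable : ∀ ⦃A B C : E⦄ (f : A ⟶ B) (g : C ⟶ B), RegEpi f → RegEpi (pullback.snd f g)
  effective : ∀ ⦃R X : E⦄ (r₁ r₂ : R ⟶ X), IsEquivRelPair r₁ r₂ →
    ∃ (Q : E) (q : X ⟶ Q) (w : r₁ ≫ q = r₂ ≫ q),
      Nonempty (IsColimit (Cofork.ofπ q w)) ∧ IsPullback r₁ r₂ q q

/-- A projective cover of `E`: a (full sub)collection of objects, each projective,
such that every object of `E` admits a regular epimorphism from one of them. -/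
def IsProjectiveCover (P : Set E) : Prop :=
  (∀ X ∈ P, RegProjective X) ∧ ∀ A : E, ∃ X ∈ P, ∃ p : X ⟶ A, RegEpi p

section FinLim
variable [HasFiniteLimits E]

/-- `X` is internally projective: every arrow `T ⨯ X ⟶ B` lifts along a regular epi
`A ↠ B` after passing to a regular epi `U ↠ T`. -/
def InternallyProjective (X : E) : Prop :=
  ∀ ⦃T A B : E⦄ (e : A ⟶ B), RegEpi e → ∀ f : T ⨯ X ⟶ B,
    ∃ (U : E) (u : U ⟶ T) (g : U ⨯ X ⟶ A), RegEpi u ∧ g ≫ e = prod.map u (𝟙 X) ≫ f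

/-- Cartesian closure, as a property: for every object `X` the functor `(−) ⨯ X` has a
right adjoint. -/
def CartesianClosedP (E : Type u) [Category.{v} E] [HasFiniteLimits E] : Prop :=
  ∀ X : E, (prod.functor.flip.obj X).IsLeftAdjoint

/-- Local cartesian closure, as a property: every slice is cartesian closed. -/
def LocallyCartesianClosedP (E : Type u) [Category.{v} E] [HasFiniteLimits E] : Prop :=
  ∀ (I : E) (F : Over I), ((prod.functor (C := Over I)).flip.obj F).IsLeftAdjoint

end FinLim

/-! ## Weak products and weak simple products -/

/-- A weak product in `P` of `X` and `Y`: a span through which every span in `P`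
factors (not necessarily uniquely). -/
structure IsWeakProduct (P : Set E) {X Y V : E} (p : V ⟶ X) (q : V ⟶ Y) : Prop where
  mem : V ∈ P
  lift : ∀ ⦃V' : E⦄, V' ∈ P → ∀ (p' : V' ⟶ X) (q' : V' ⟶ Y),
    ∃ h : V' ⟶ V, h ≫ p = p' ∧ h ≫ q = q'

/-- An arrow out of a weak product is determined by projections if it coequalises
every pair of arrows (from an object of `P`) coequalised by both projections. -/
def DeterminedByProjections (P : Set E) {V X Y Z : E} (p : V ⟶ X) (q : V ⟶ Y)
    (f : V ⟶ Z) : Prop :=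
  ∀ ⦃V' : E⦄, V' ∈ P → ∀ (h k : V' ⟶ V), h ≫ p = k ≫ p → h ≫ q = k ≫ q → h ≫ f = k ≫ f

/-- A candidate diagram for a weak simple product of a span `J ←f Y →g X`. -/
structure WSPCone (P : Set E) {J Y X : E} (f : Y ⟶ J) (g : Y ⟶ X)
    (W V : E) (w : W ⟶ J) (p : V ⟶ W) (q : V ⟶ X) (e : V ⟶ Y) : Prop where
  memW : W ∈ P
  wp : IsWeakProduct P p q
  det : DeterminedByProjections P p q e
  comm₁ : p ≫ w = e ≫ f
  comm₂ : q = e ≫ g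

/-- A weak simple product: a weakly terminal candidate diagram. -/
structure IsWeakSimpleProduct (P : Set E) {J Y X : E} (f : Y ⟶ J) (g : Y ⟶ X)
    (W V : E) (w : W ⟶ J) (p : V ⟶ W) (q : V ⟶ X) (e : V ⟶ Y) : Prop where
  cone : WSPCone P f g W V w p q e
  lift : ∀ ⦃W' V' : E⦄ (w' : W' ⟶ J) (p' : V' ⟶ W') (q' : V' ⟶ X) (e' : V' ⟶ Y),
    WSPCone P f g W' V' w' p' q' e' →
    ∃ (α : W' ⟶ W) (β : V' ⟶ V),
      α ≫ w = w' ∧ β ≫ p = p' ≫ α ∧ β ≫ q = q' ∧ β ≫ e = e'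

/-- `P` has weak simple products. -/
def HasWeakSimpleProducts (P : Set E) : Prop :=
  ∀ ⦃J Y X : E⦄, J ∈ P → Y ∈ P → X ∈ P → ∀ (f : Y ⟶ J) (g : Y ⟶ X),
    ∃ (W V : E) (w : W ⟶ J) (p : V ⟶ W) (q : V ⟶ X) (e : V ⟶ Y),
      IsWeakSimpleProduct P f g W V w p q e

/-! ## Pseudo simple products -/

/-- A candidate diagram for a pseudo simple product (no determinacy requirement). -/
structure PSPCone (P : Set E) {J Y X : E} (f : Y ⟶ J) (g : Y ⟶ X)
    (W V : E) (w : W ⟶ J) (p : V ⟶ W) (q : V ⟶ X) (e : V ⟶ Y) : Prop where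
  memW : W ∈ P
  wp : IsWeakProduct P p q
  comm₁ : p ≫ w = e ≫ f
  comm₂ : q = e ≫ g

/-- A pseudo simple product: a weakly terminal candidate diagram. -/
structure IsPseudoSimpleProduct (P : Set E) {J Y X : E} (f : Y ⟶ J) (g : Y ⟶ X)
    (W V : E) (w : W ⟶ J) (p : V ⟶ W) (q : V ⟶ X) (e : V ⟶ Y) : Prop where
  cone : PSPCone P f g W V w p q e
  lift : ∀ ⦃W' V' : E⦄ (w' : W' ⟶ J) (p' : V' ⟶ W') (q' : V' ⟶ X) (e' : V' ⟶ Y),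
    PSPCone P f g W' V' w' p' q' e' →
    ∃ (α : W' ⟶ W) (β : V' ⟶ V),
      α ≫ w = w' ∧ β ≫ p = p' ≫ α ∧ β ≫ q = q' ∧ β ≫ e = e'

/-- `P` has pseudo simple products. -/
def HasPseudoSimpleProducts (P : Set E) : Prop :=
  ∀ ⦃J Y X : E⦄, J ∈ P → Y ∈ P → X ∈ P → ∀ (f : Y ⟶ J) (g : Y ⟶ X),
    ∃ (W V : E) (w : W ⟶ J) (p : V ⟶ W) (q : V ⟶ X) (e : V ⟶ Y),
      IsPseudoSimpleProduct P f g W V w p q e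

/-! ## Weak exponentials -/

/-- A candidate diagram for a weak exponential of `X` and `Y`. -/
structure WExpCone (P : Set E) {X Y : E} (W V : E) (p : V ⟶ W) (q : V ⟶ X)
    (e : V ⟶ Y) : Prop where
  memW : W ∈ P
  wp : IsWeakProduct P p q
  det : DeterminedByProjections P p q e

/-- A weak exponential of `X` and `Y` in `P`. -/
structure IsWeakExponential (P : Set E) {X Y : E} (W V : E) (p : V ⟶ W) (q : V ⟶ X)
    (e : V ⟶ Y) : Prop where
  cone : WExpCone P W V p q e
  lift : ∀ ⦃W' V' : E⦄ (p' : V' ⟶ W') (q' : V' ⟶ X) (e' : V' ⟶ Y),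
    WExpCone P W' V' p' q' e' →
    ∃ (α : W' ⟶ W) (β : V' ⟶ V), β ≫ p = p' ≫ α ∧ β ≫ q = q' ∧ β ≫ e = e'

/-- `P` has weak exponentials. -/
def HasWeakExponentials (P : Set E) : Prop :=
  ∀ ⦃X Y : E⦄, X ∈ P → Y ∈ P →
    ∃ (W V : E) (p : V ⟶ W) (q : V ⟶ X) (e : V ⟶ Y), IsWeakExponential P W V p q e

/-- A quasi exponential of `X` and `B`: the weak universal property of an exponential
restricted to projective sources. -/
def IsQuasiExponential [HasFiniteLimits E] (P : Set E) (X : E) {B : E} (W : E)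
    (e : W ⨯ X ⟶ B) : Prop :=
  ∀ ⦃Z : E⦄, Z ∈ P → ∀ f : Z ⨯ X ⟶ B, ∃ g : Z ⟶ W, prod.map g (𝟙 X) ≫ e = f

section FinLim2
variable [HasFiniteLimits E]

/-! ## Pseudo equivalence relations, equalities and generalised weak (simple) products -/

/-- A pseudo equivalence relation: a pair of parallel arrows whose image in `E` is an
equivalence relation. -/
def IsPseudoEquivRel {Y1 Y0 : E} (y₁ y₂ : Y1 ⟶ Y0) : Prop :=
  ∃ (R : E) (e : Y1 ⟶ R) (m : R ⟶ Y0 ⨯ Y0), RegEpi e ∧ Mono m ∧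
    e ≫ m = prod.lift y₁ y₂ ∧ IsEquivRelPair (m ≫ prod.fst) (m ≫ prod.snd)

/-- An equality for a weak limit, relative to the comparison arrow `c : V0 ⟶ L` into
the actual limit: a pseudo equivalence relation `v₁, v₂ : V1 ⇉ V0` in `P` such that
`c` is a coequaliser of `v₁, v₂` and `V1` regularly covers the kernel pair of `c`. -/
structure IsEqualityFor (P : Set E) {V1 V0 L : E} (c : V0 ⟶ L) (v₁ v₂ : V1 ⟶ V0) :
    Prop where
  mem : V1 ∈ P
  per : IsPseudoEquivRel v₁ v₂
  w : v₁ ≫ c = v₂ ≫ c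
  coeq : Nonempty (IsColimit (Cofork.ofπ c w))
  cover : RegEpi (pullback.lift v₁ v₂ w)

/-- An arrow `e : V ⟶ Z0` out of a weak product with projections `p, q` preserves
projections with respect to a pseudo equivalence relation `z₁, z₂ : Z1 ⇉ Z0` if for
any equality `v₁, v₂ : V1 ⇉ V` for the weak product there is `t : V1 ⟶ Z1` with
`t ≫ zᵢ = vᵢ ≫ e`. -/
def PreservesProjWP (P : Set E) {V X Y Z1 Z0 : E} (p : V ⟶ X) (q : V ⟶ Y)
    (z₁ z₂ : Z1 ⟶ Z0) (e : V ⟶ Z0) : Prop :=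
  ∀ ⦃V1 : E⦄ (v₁ v₂ : V1 ⟶ V), IsEqualityFor P (prod.lift p q) v₁ v₂ →
    ∃ t : V1 ⟶ Z1, t ≫ z₁ = v₁ ≫ e ∧ t ≫ z₂ = v₂ ≫ e

/-- A candidate diagram for a generalised weak simple product of `f` and `g` with
respect to the pseudo equivalence relation `y₁, y₂`. -/
structure GWSPCone (P : Set E) {Y1 Y0 J X : E} (y₁ y₂ : Y1 ⟶ Y0) (f : Y0 ⟶ J)
    (g : Y0 ⟶ X) (W V : E) (w : W ⟶ J) (p : V ⟶ W) (q : V ⟶ X) (e : V ⟶ Y0) :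
    Prop where
  memW : W ∈ P
  wp : IsWeakProduct P p q
  pres : PreservesProjWP P p q y₁ y₂ e
  comm₁ : p ≫ w = e ≫ f
  comm₂ : q = e ≫ g

/-- A generalised weak simple product: a weakly terminal candidate diagram. -/
structure IsGWSP (P : Set E) {Y1 Y0 J X : E} (y₁ y₂ : Y1 ⟶ Y0) (f : Y0 ⟶ J)
    (g : Y0 ⟶ X) (W V : E) (w : W ⟶ J) (p : V ⟶ W) (q : V ⟶ X) (e : V ⟶ Y0) :
    Prop where
  cone : GWSPCone P y₁ y₂ f g W V w p q e
  lift : ∀ ⦃W' V' : E⦄ (w' : W' ⟶ J) (p' : V' ⟶ W') (q' : V' ⟶ X) (e' : V' ⟶ Y0),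
    GWSPCone P y₁ y₂ f g W' V' w' p' q' e' →
    ∃ (α : W' ⟶ W) (β : V' ⟶ V),
      α ≫ w = w' ∧ β ≫ p = p' ≫ α ∧ β ≫ q = q' ∧ β ≫ e = e'

/-- `P` has generalised weak simple products. -/
def HasGWSP (P : Set E) : Prop :=
  ∀ ⦃Y1 Y0 J X : E⦄, Y1 ∈ P → Y0 ∈ P → J ∈ P → X ∈ P →
    ∀ (y₁ y₂ : Y1 ⟶ Y0), IsPseudoEquivRel y₁ y₂ →
    ∀ (f : Y0 ⟶ J) (g : Y0 ⟶ X), y₁ ≫ f = y₂ ≫ f → y₁ ≫ g = y₂ ≫ g →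
    ∃ (W V : E) (w : W ⟶ J) (p : V ⟶ W) (q : V ⟶ X) (e : V ⟶ Y0),
      IsGWSP P y₁ y₂ f g W V w p q e

/-- A candidate diagram for a generalised weak exponential of `X` and `y₁, y₂`. -/
structure GWExpCone (P : Set E) {X Y1 Y0 : E} (y₁ y₂ : Y1 ⟶ Y0)
    (W V : E) (p : V ⟶ W) (q : V ⟶ X) (e : V ⟶ Y0) : Prop where
  memW : W ∈ P
  wp : IsWeakProduct P p q
  pres : PreservesProjWP P p q y₁ y₂ e

/-- A generalised weak exponential of `X` and a pseudo equivalence relation. -/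
structure IsGWExp (P : Set E) {X Y1 Y0 : E} (y₁ y₂ : Y1 ⟶ Y0)
    (W V : E) (p : V ⟶ W) (q : V ⟶ X) (e : V ⟶ Y0) : Prop where
  cone : GWExpCone P y₁ y₂ W V p q e
  lift : ∀ ⦃W' V' : E⦄ (p' : V' ⟶ W') (q' : V' ⟶ X) (e' : V' ⟶ Y0),
    GWExpCone P y₁ y₂ W' V' p' q' e' →
    ∃ (α : W' ⟶ W) (β : V' ⟶ V), β ≫ p = p' ≫ α ∧ β ≫ q = q' ∧ β ≫ e = e'

/-! ## Weak pullbacks and generalised weak dependent products -/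

/-- A weak pullback in `P` of the cospan `X →f J ←w W`. -/
structure IsWeakPullback (P : Set E) {X J W V : E} (f : X ⟶ J) (w : W ⟶ J)
    (a : V ⟶ X) (b : V ⟶ W) : Prop where
  mem : V ∈ P
  comm : a ≫ f = b ≫ w
  lift : ∀ ⦃V' : E⦄, V' ∈ P → ∀ (a' : V' ⟶ X) (b' : V' ⟶ W), a' ≫ f = b' ≫ w →
    ∃ h : V' ⟶ V, h ≫ a = a' ∧ h ≫ b = b'

/-- Preservation of projections for an arrow out of a weak pullback. -/
def PreservesProjWPB (P : Set E) {V X J W Z1 Z0 : E} (f : X ⟶ J) (w : W ⟶ J)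
    (a : V ⟶ X) (b : V ⟶ W) (h : a ≫ f = b ≫ w) (z₁ z₂ : Z1 ⟶ Z0) (e : V ⟶ Z0) :
    Prop :=
  ∀ ⦃V1 : E⦄ (v₁ v₂ : V1 ⟶ V), IsEqualityFor P (pullback.lift a b h) v₁ v₂ →
    ∃ t : V1 ⟶ Z1, t ≫ z₁ = v₁ ≫ e ∧ t ≫ z₂ = v₂ ≫ e

/-- A candidate diagram for a generalised weak dependent product of `g : Y0 ⟶ X`
along `f : X ⟶ J` with respect to `y₁, y₂`. -/
structure GWDPCone (P : Set E) {Y1 Y0 X J : E} (y₁ y₂ : Y1 ⟶ Y0) (g : Y0 ⟶ X)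
    (f : X ⟶ J) (W V : E) (w : W ⟶ J) (a : V ⟶ X) (b : V ⟶ W) (e : V ⟶ Y0) :
    Prop where
  memW : W ∈ P
  comm : a ≫ f = b ≫ w
  wpb : IsWeakPullback P f w a b
  overX : e ≫ g = a
  pres : PreservesProjWPB P f w a b comm y₁ y₂ e

/-- A generalised weak dependent product: a weakly terminal candidate diagram. -/
structure IsGWDP (P : Set E) {Y1 Y0 X J : E} (y₁ y₂ : Y1 ⟶ Y0) (g : Y0 ⟶ X)
    (f : X ⟶ J) (W V : E) (w : W ⟶ J) (a : V ⟶ X) (b : V ⟶ W) (e : V ⟶ Y0) :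
    Prop where
  cone : GWDPCone P y₁ y₂ g f W V w a b e
  lift : ∀ ⦃W' V' : E⦄ (w' : W' ⟶ J) (a' : V' ⟶ X) (b' : V' ⟶ W') (e' : V' ⟶ Y0),
    GWDPCone P y₁ y₂ g f W' V' w' a' b' e' →
    ∃ (α : W' ⟶ W) (β : V' ⟶ V),
      α ≫ w = w' ∧ β ≫ a = a' ∧ β ≫ b = b' ≫ α ∧ β ≫ e = e'

/-- `P` has generalised weak dependent products (i.e. `P` is weakly locally cartesian
closed). -/
def HasGWDP (P : Set E) : Prop :=
  ∀ ⦃Y1 Y0 X J : E⦄, Y1 ∈ P → Y0 ∈ P → X ∈ P → J ∈ P →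
    ∀ (y₁ y₂ : Y1 ⟶ Y0), IsPseudoEquivRel y₁ y₂ →
    ∀ (g : Y0 ⟶ X) (f : X ⟶ J), y₁ ≫ g = y₂ ≫ g →
    ∃ (W V : E) (w : W ⟶ J) (a : V ⟶ X) (b : V ⟶ W) (e : V ⟶ Y0),
      IsGWDP P y₁ y₂ g f W V w a b e

/-! ## The functor `w_X` on subobjects induced by weak simple products -/

/-- The adjunction property of the weak-simple-product operation `w_X` on subobjects:
for every subobject `a : A ↪ J ⨯ X`, every `P`-cover `Y ↠ A`, every weak simple
product `W → J` of the induced span and every image factorisation `W ↠ I ↪ J` of it,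
the subobject `I ↪ J` is a value at `a` of a right adjoint to
`(−) ⨯ X : Sub(J) → Sub(J ⨯ X)`. -/
def WAdj (P : Set E) (J X : E) : Prop :=
  ∀ ⦃A : E⦄ (a : A ⟶ J ⨯ X), Mono a →
  ∀ ⦃Y : E⦄, Y ∈ P → ∀ (c : Y ⟶ A), RegEpi c →
  ∀ ⦃W V : E⦄ (w : W ⟶ J) (p : V ⟶ W) (q : V ⟶ X) (e : V ⟶ Y),
    IsWeakSimpleProduct P (c ≫ a ≫ prod.fst) (c ≫ a ≫ prod.snd) W V w p q e →
  ∀ ⦃I : E⦄ (ew : W ⟶ I) (m : I ⟶ J), RegEpi ew → Mono m → ew ≫ m = w →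
  ∀ ⦃B : E⦄ (b : B ⟶ J), Mono b →
    ((∃ t : B ⨯ X ⟶ A, t ≫ a = prod.map b (𝟙 X)) ↔ ∃ s : B ⟶ I, s ≫ m = b)

/-! ## Weak dependent products (à la Carboni–Rosolini) -/

/-- `P` has weak dependent products: for `f : X ⟶ J` and `g : Y ⟶ X` in `P` there are
`w : W ⟶ J` in `P` and a surjection `Hom_{P/J}(h, w) → Hom_{P/X}(f*(h), g)` natural
in `h ∈ P/J`. -/
def HasWeakDependentProducts (P : Set E) : Prop :=
  ∀ ⦃X J Y : E⦄, X ∈ P → J ∈ P → Y ∈ P → ∀ (f : X ⟶ J) (g : Y ⟶ X),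
    ∃ (W : E) (_ : W ∈ P) (w : W ⟶ J)
      (ε : ∀ ⦃T : E⦄, T ∈ P → ∀ (h : T ⟶ J) (k : T ⟶ W), k ≫ w = h →
        (pullback h f ⟶ Y)),
      (∀ ⦃T : E⦄ (hT : T ∈ P) (h : T ⟶ J) (k : T ⟶ W) (hk : k ≫ w = h),
         ε hT h k hk ≫ g = pullback.snd h f) ∧
      (∀ ⦃T : E⦄ (hT : T ∈ P) (h : T ⟶ J) (d : pullback h f ⟶ Y),
         d ≫ g = pullback.snd h f → ∃ (k : T ⟶ W) (hk : k ≫ w = h), ε hT h k hk = d) ∧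
      (∀ ⦃T' T : E⦄ (hT' : T' ∈ P) (hT : T ∈ P) (u : T' ⟶ T) (h : T ⟶ J) (k : T ⟶ W)
         (hk : k ≫ w = h),
         ε hT' (u ≫ h) (u ≫ k) (by rw [Category.assoc, hk]) =
           pullback.map (u ≫ h) f h f u (𝟙 X) (𝟙 J) (by simp) (by simp) ≫ ε hT h k hk)

end FinLim2

/-! Cover `X` by `p : P₀ ↠ X` with `P₀ ∈ P`, and the kernel pair of `p` by `c : P₁ ↠ P₀ ×_X P₀`
with `P₁ ∈ P`. Regular epis are stable under pullback and `A ⨯ −` preserves pullbacks, so for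
every `A` the fork `A ⨯ P₁ ⇉ A ⨯ P₀ → A ⨯ X` is again a coequalizer: `(−) ⨯ X` is a pointwise
coequalizer of `(−) ⨯ P₁ ⇉ (−) ⨯ P₀`. A pointwise coequalizer of left adjoints is a left
adjoint, its right adjoint being the equalizer of the conjugate transformations
`P₀ ⟹ (−) ⇉ P₁ ⟹ (−)`. -/

section LeftAdjoint

variable {C D : Type*} [Category C] [Category D]

lemma homEquiv_app_comp_eq_comp_conjugateEquiv {L₀ L₁ : C ⥤ D} {R₀ R₁ : D ⥤ C}
    (adj₀ : L₀ ⊣ R₀) (adj₁ : L₁ ⊣ R₁) (δ : L₁ ⟶ L₀) {A : C} {Z : D} (h : L₀.obj A ⟶ Z) :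
    adj₁.homEquiv A Z (δ.app A ≫ h) =
      adj₀.homEquiv A Z h ≫ (conjugateEquiv adj₀ adj₁ δ).app Z := by
  apply (adj₁.homEquiv A Z).symm.injective
  rw [Equiv.symm_apply_apply, Adjunction.homEquiv_counit, Functor.map_comp, Category.assoc,
    conjugateEquiv_counit, ← Category.assoc, δ.naturality, Category.assoc,
    ← Adjunction.homEquiv_counit, Equiv.symm_apply_apply]

theorem isLeftAdjoint_of_isColimit_cofork_app [HasEqualizers C] {L₀ L₁ L : C ⥤ D}
    [L₀.IsLeftAdjoint] [L₁.IsLeftAdjoint] {δ₁ δ₂ : L₁ ⟶ L₀} {π : L₀ ⟶ L}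
    (w : ∀ A, δ₁.app A ≫ π.app A = δ₂.app A ≫ π.app A)
    (hπ : ∀ A, IsColimit (Cofork.ofπ (π.app A) (w A))) :
    L.IsLeftAdjoint := by
  let adj₀ := Adjunction.ofIsLeftAdjoint L₀
  let adj₁ := Adjunction.ofIsLeftAdjoint L₁
  let u₁ := conjugateEquiv adj₀ adj₁ δ₁
  let u₂ := conjugateEquiv adj₀ adj₁ δ₂
  let e : ∀ A Z, (L.obj A ⟶ Z) ≃ (A ⟶ equalizer (u₁.app Z) (u₂.app Z)) := fun A Z =>
    (Cofork.IsColimit.homIso (hπ A) Z).trans <|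
      (Equiv.subtypeEquiv (adj₀.homEquiv A Z) fun h => by
        rw [← (adj₁.homEquiv A Z).apply_eq_iff_eq, homEquiv_app_comp_eq_comp_conjugateEquiv,
          homEquiv_app_comp_eq_comp_conjugateEquiv]).trans
      (Fork.IsLimit.homIso (equalizerIsEqualizer _ _) A).symm
  refine ⟨_, ⟨Adjunction.adjunctionOfEquivRight e fun A' A Z f g => ?_⟩⟩
  have hι : ∀ {A Z} (x : { g : A ⟶ L₀.rightAdjoint.obj Z // g ≫ u₁.app Z = g ≫ u₂.app Z }),
      (Fork.IsLimit.homIso (equalizerIsEqualizer _ _) A).symm x ≫ equalizer.ι _ _ = x.1 :=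
    fun x => congrArg Subtype.val ((Fork.IsLimit.homIso _ _).apply_symm_apply x)
  apply equalizer.hom_ext
  simp only [e, Equiv.trans_apply, Category.assoc, hι]
  change adj₀.homEquiv A' Z (π.app A' ≫ L.map f ≫ g) = f ≫ adj₀.homEquiv A Z (π.app A ≫ g)
  rw [← π.naturality_assoc, Adjunction.homEquiv_naturality_left]

end LeftAdjoint

def RegEpiPullbackStable (E : Type u) [Category.{v} E] [HasFiniteLimits E] : Prop :=
  ∀ ⦃A B C : E⦄ (f : A ⟶ B) (g : C ⟶ B), RegEpi f → RegEpi (pullback.snd f g)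

lemma RegEpi.epi {A B : E} {f : A ⟶ B} (hf : RegEpi f) : Epi f :=
  hf.elim (RegularEpi.epi f)

noncomputable def RegEpi.isColimitCofork {K B C : E} {e : B ⟶ C} [HasPullback e e]
    (he : RegEpi e) {k₁ k₂ : K ⟶ B} (w : k₁ ≫ e = k₂ ≫ e)
    (hk : Epi (pullback.lift k₁ k₂ w)) : IsColimit (Cofork.ofπ e w) :=
  have : EffectiveEpi e := he.some.effectiveEpi
  have hker := isColimitCoforkOfEffectiveEpi e _ (pullbackIsPullback e e)
  Cofork.IsColimit.mk' _ fun s =>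
    have hs : pullback.fst e e ≫ s.π = pullback.snd e e ≫ s.π :=
      (cancel_epi (pullback.lift k₁ k₂ w)).1 <| by
        rw [pullback.lift_fst_assoc, pullback.lift_snd_assoc]; exact s.condition
    ⟨Cofork.IsColimit.desc hker s.π hs, Cofork.IsColimit.π_desc' hker _ _,
      fun hm => (cancel_epi e).1 (hm.trans (Cofork.IsColimit.π_desc' hker _ _).symm)⟩

section PullbackStable

variable [HasFiniteLimits E]

lemma RegEpi.of_isPullback (hE : RegEpiPullbackStable E) {P A B C : E} {fst : P ⟶ A}
    {snd : P ⟶ C} {f : A ⟶ B} {g : C ⟶ B} (h : IsPullback fst snd f g) (hf : RegEpi f) :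
    RegEpi snd :=
  (hE f g hf).elim fun r =>
    ⟨RegularEpi.ofArrowIso (Arrow.isoMk h.isoPullback.symm (Iso.refl _) (by simp)) r⟩

lemma isPullback_snd_prod_map_id (A : E) {S T : E} (u : S ⟶ T) :
    IsPullback prod.snd (prod.map (𝟙 A) u) u prod.snd :=
  IsPullback.of_isLimit' ⟨by simp⟩ <|
    PullbackCone.IsLimit.mk _ (fun s => prod.lift (s.snd ≫ prod.fst) s.fst)
      (fun s => prod.lift_snd _ _)
      (fun s => by ext <;> simp [prod.lift_fst, prod.lift_snd, s.condition])
      (fun s m h₁ h₂ => by ext <;> simp [← h₁, ← h₂, prod.lift_fst, prod.lift_snd])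

lemma RegEpi.prod_map_id (hE : RegEpiPullbackStable E) (A : E) {S T : E} {u : S ⟶ T}
    (hu : RegEpi u) : RegEpi (prod.map (𝟙 A) u) :=
  RegEpi.of_isPullback hE (isPullback_snd_prod_map_id A u) hu

lemma epi_pullbackLift_prod_map_id (hE : RegEpiPullbackStable E) (A : E) {P₁ P₀ X : E}
    {p : P₀ ⟶ X} {c : P₁ ⟶ pullback p p} (hc : RegEpi c) :
    Epi (pullback.lift (f := prod.map (𝟙 A) p) (g := prod.map (𝟙 A) p)
      (prod.map (𝟙 A) (c ≫ pullback.fst p p))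
      (prod.map (𝟙 A) (c ≫ pullback.snd p p)) (by
        rw [prod.map_map, prod.map_map, Category.assoc, Category.assoc, pullback.condition])) := by
  -- `prod_preservesConnectedLimits` only handles shapes in the universe of morphisms of `E`.
  have : PreservesLimitsOfShape WalkingCospan (prod.functor.obj A) :=
    have := prod_preservesConnectedLimits (J := ULiftHom.{v} (ULift.{v} WalkingCospan)) A
    preservesLimitsOfShape_of_equiv (ULiftHomULiftCategory.equiv.{v, v} WalkingCospan).symm _
  have hcA : Epi (prod.map (𝟙 A) c) := (hc.prod_map_id hE A).epi
  let φ : A ⨯ pullback p p ⟶ pullback (prod.map (𝟙 A) p) (prod.map (𝟙 A) p) :=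
    (PreservesPullback.iso (prod.functor.obj A) p p).hom
  have hφ₁ : φ ≫ pullback.fst _ _ = prod.map (𝟙 A) (pullback.fst p p) :=
    PreservesPullback.iso_hom_fst _ _ _
  have hφ₂ : φ ≫ pullback.snd _ _ = prod.map (𝟙 A) (pullback.snd p p) :=
    PreservesPullback.iso_hom_snd _ _ _
  have hφ : IsIso φ := inferInstanceAs (IsIso (PreservesPullback.iso _ p p).hom)
  convert epi_comp (prod.map (𝟙 A) c) φ using 1
  apply pullback.hom_ext <;> simp [hφ₁, hφ₂, prod.map_map, pullback.lift_fst, pullback.lift_snd]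

end PullbackStable

/-- `E` is cartesian closed iff every object of the projective cover `P`
is exponentiable in `E`. -/
theorem stmt11 {E : Type u} [Category.{v} E] [HasFiniteLimits E]
    (hE : IsExact E) (P : Set E) (hP : IsProjectiveCover P) :
    CartesianClosedP E ↔ ∀ X ∈ P, (prod.functor.flip.obj X).IsLeftAdjoint := by
  refine ⟨fun h X _ => h X, fun hexp X => ?_⟩
  obtain ⟨P₀, hP₀, p, hp⟩ := hP.2 X
  obtain ⟨P₁, hP₁, c, hc⟩ := hP.2 (pullback p p)
  have hL₀ := hexp P₀ hP₀
  have hL₁ := hexp P₁ hP₁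
  exact isLeftAdjoint_of_isColimit_cofork_app
    (δ₁ := prod.functor.flip.map (c ≫ pullback.fst p p))
    (δ₂ := prod.functor.flip.map (c ≫ pullback.snd p p)) (π := prod.functor.flip.map p)
    (fun A => by dsimp; simp only [← Functor.map_comp, Category.assoc, pullback.condition])
    fun A => (hp.prod_map_id hE.stable A).isColimitCofork _
      (epi_pullbackLift_prod_map_id hE.stable A hc)

end ExComp
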